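/- arXiv:1006.4050 — 6 statements merged into one kernel-verified Lean document; each statement's English description precedes it below -/
import Mathlib

section
/- Let P = (p q; r s) and A = (a b; c d) be 2×2 nonnegative matrices with positive determinants, with p, q > 0. Write u = r/p, v = s/q for P, and u' = r'/p', v' = s'/q' for PA = (p' q'; r' s'). Then the interval [u', v'] is contained in the interval [u, v]. -/
open Matrix

/-!
Column `j` of `P * A` is `A 0 j • (p, r) + A 1 j • (q, s)`, so its slope is a weighted mediant
of the two column slopes `u = r / p` and `v = s / q` of `P`. Since `det P > 0` means `u < v`,
the mediant moves right of `u` as soon as the weight on the second column is nonnegative and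
left of `v` as soon as the weight on the first one is; the positive determinant of the
nonnegative matrix `A` keeps its diagonal, hence the new denominators, positive.
-/

section Mediant

variable {K : Type*} [Field K] [LinearOrder K] [IsStrictOrderedRing K] {p q r s x y : K}

theorem div_le_weighted_mediant (hp : 0 < p) (hden : 0 < p * x + q * y) (hy : 0 ≤ y)
    (hdet : q * r ≤ p * s) : r / p ≤ (r * x + s * y) / (p * x + q * y) := by
  rw [div_le_div_iff₀ hp hden]
  nlinarith [mul_le_mul_of_nonneg_left hdet hy]

theorem weighted_mediant_le_div (hq : 0 < q) (hden : 0 < p * x + q * y) (hx : 0 ≤ x)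
    (hdet : q * r ≤ p * s) : (r * x + s * y) / (p * x + q * y) ≤ s / q := by
  rw [div_le_div_iff₀ hden hq]
  nlinarith [mul_le_mul_of_nonneg_left hdet hx]

end Mediant

namespace Matrix

theorem fin_two_mul_apply {α : Type*} [Mul α] [AddCommMonoid α]
    (P A : Matrix (Fin 2) (Fin 2) α) (i j : Fin 2) :
    (P * A) i j = P i 0 * A 0 j + P i 1 * A 1 j := by
  simp only [mul_apply, Fin.sum_univ_two]

variable {R : Type*} [CommRing R] [LinearOrder R] [IsStrictOrderedRing R]
  {A : Matrix (Fin 2) (Fin 2) R}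

theorem fin_two_apply_zero_zero_pos (hA : ∀ i j, 0 ≤ A i j) (hdet : 0 < A.det) :
    0 < A 0 0 := by
  rw [det_fin_two] at hdet
  refine (hA 0 0).lt_of_ne fun h ↦ ?_
  rw [← h, zero_mul] at hdet
  linarith [mul_nonneg (hA 0 1) (hA 1 0)]

theorem fin_two_apply_one_one_pos (hA : ∀ i j, 0 ≤ A i j) (hdet : 0 < A.det) :
    0 < A 1 1 := by
  rw [det_fin_two] at hdet
  refine (hA 1 1).lt_of_ne fun h ↦ ?_
  rw [← h, mul_zero] at hdet
  linarith [mul_nonneg (hA 0 1) (hA 1 0)]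

end Matrix

theorem stmt5_general (P A : Matrix (Fin 2) (Fin 2) ℝ) (hPdet : 0 < P.det)
    (hp : 0 < P 0 0) (hq : 0 < P 0 1) (hA : ∀ i j, 0 ≤ A i j) (hAdet : 0 < A.det) :
    Set.Icc ((P * A) 1 0 / (P * A) 0 0) ((P * A) 1 1 / (P * A) 0 1) ⊆
      Set.Icc (P 1 0 / P 0 0) (P 1 1 / P 0 1) := by
  have hcross : P 0 1 * P 1 0 ≤ P 0 0 * P 1 1 := by
    rw [det_fin_two] at hPdet
    linarith
  have ha := fin_two_apply_zero_zero_pos hA hAdet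
  have hd := fin_two_apply_one_one_pos hA hAdet
  simp only [fin_two_mul_apply]
  refine Set.Icc_subset_Icc (div_le_weighted_mediant hp ?_ (hA 1 0) hcross)
    (weighted_mediant_le_div hq ?_ (hA 0 1) hcross)
  · exact add_pos_of_pos_of_nonneg (mul_pos hp ha) (mul_nonneg hq.le (hA 1 0))
  · exact add_pos_of_nonneg_of_pos (mul_nonneg hp.le (hA 0 1)) (mul_pos hq hd)

/-- Nested-interval property for column slopes: right multiplication by a nonnegative matrix
with positive determinant shrinks the slope interval. -/
theorem stmt5 (P A : Matrix (Fin 2) (Fin 2) ℝ) (hP : ∀ i j, 0 ≤ P i j) (hPdet : 0 < P.det)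
    (hp : 0 < P 0 0) (hq : 0 < P 0 1) (hA : ∀ i j, 0 ≤ A i j) (hAdet : 0 < A.det) :
    Set.Icc ((P * A) 1 0 / (P * A) 0 0) ((P * A) 1 1 / (P * A) 0 1) ⊆
      Set.Icc (P 1 0 / P 0 0) (P 1 1 / P 0 1) :=
  stmt5_general P A hPdet hp hq hA hAdet
end

section
/- Let P = (p q; r s) and A = (a b; c d) be 2×2 nonnegative matrices with positive determinants, with p, q > 0. Set α = (1 + (c/a)·(q/p))⁻¹, β = (1 + (b/d)·(p/q))⁻¹, γ = 1 − (c/a)(b/d). Then α, β, γ ∈ (0, 1], and with PA = (p' q'; r' s'), the interval lengths satisfy s'/q' − r'/p' = αβγ·(s/q − r/p). -/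
open Matrix

/-!
Every quantity is a ratio of minors. The length of the slope interval of `P` is
`det P / (p q)`, and `α = p a / p'`, `β = q d / q'`, `γ = det A / (a d)`, where `p' = p a + q c`
and `q' = p b + q d` are the top entries of `PA`. Hence `α β γ · det P / (p q) = det P det A / (p' q')`,
which is the length of the slope interval of `PA` because the determinant is multiplicative.
The bounds hold since `α`, `β` are inverses of numbers `≥ 1` and `0 < det A ≤ a d`.
-/

namespace Matrix

variable {K : Type*} [Field K]

/-- The length `s/q - r/p` of the slope interval `[r/p, s/q]` of `P = (p q; r s)`. -/
def slopeIntervalLength (P : Matrix (Fin 2) (Fin 2) K) : K :=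
  P 1 1 / P 0 1 - P 1 0 / P 0 0

theorem slopeIntervalLength_eq_det_div (P : Matrix (Fin 2) (Fin 2) K) (hp : P 0 0 ≠ 0)
    (hq : P 0 1 ≠ 0) : slopeIntervalLength P = P.det / (P 0 0 * P 0 1) := by
  rw [slopeIntervalLength, det_fin_two]
  field_simp

theorem one_sub_div_mul_div_eq_det_div (A : Matrix (Fin 2) (Fin 2) K) (ha : A 0 0 ≠ 0)
    (hd : A 1 1 ≠ 0) : 1 - A 1 0 / A 0 0 * (A 0 1 / A 1 1) = A.det / (A 0 0 * A 1 1) := by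
  rw [det_fin_two]
  field_simp

theorem slopeIntervalLength_mul (P A : Matrix (Fin 2) (Fin 2) K) (hp : P 0 0 ≠ 0)
    (hq : P 0 1 ≠ 0) (ha : A 0 0 ≠ 0) (hd : A 1 1 ≠ 0) (hp' : (P * A) 0 0 ≠ 0)
    (hq' : (P * A) 0 1 ≠ 0) :
    slopeIntervalLength (P * A) =
      (1 + A 1 0 / A 0 0 * (P 0 1 / P 0 0))⁻¹ * (1 + A 0 1 / A 1 1 * (P 0 0 / P 0 1))⁻¹ *
        (1 - A 1 0 / A 0 0 * (A 0 1 / A 1 1)) * slopeIntervalLength P := by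
  have hα : 1 + A 1 0 / A 0 0 * (P 0 1 / P 0 0) = (P * A) 0 0 / (P 0 0 * A 0 0) := by
    simp only [mul_apply, Fin.sum_univ_two]
    field_simp
  have hβ : 1 + A 0 1 / A 1 1 * (P 0 0 / P 0 1) = (P * A) 0 1 / (P 0 1 * A 1 1) := by
    simp only [mul_apply, Fin.sum_univ_two]
    field_simp
    ring
  rw [slopeIntervalLength_eq_det_div _ hp' hq', slopeIntervalLength_eq_det_div _ hp hq,
    one_sub_div_mul_div_eq_det_div _ ha hd, hα, hβ, det_mul]
  field_simp

theorem diag_pos_of_nonneg_of_det_pos {A : Matrix (Fin 2) (Fin 2) ℝ}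
    (hA : ∀ i j, 0 ≤ A i j) (hAdet : 0 < A.det) : 0 < A 0 0 ∧ 0 < A 1 1 := by
  rw [det_fin_two] at hAdet
  have had : 0 < A 0 0 * A 1 1 := by nlinarith [mul_nonneg (hA 0 1) (hA 1 0)]
  exact ⟨pos_of_mul_pos_left had (hA 1 1), pos_of_mul_pos_right had (hA 0 0)⟩

end Matrix

theorem inv_one_add_mem_Ioc {x : ℝ} (hx : 0 ≤ x) : (1 + x)⁻¹ ∈ Set.Ioc (0 : ℝ) 1 :=
  ⟨by positivity, inv_le_one_of_one_le₀ (le_add_of_nonneg_right hx)⟩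

theorem stmt6_general (P A : Matrix (Fin 2) (Fin 2) ℝ)
    (hp : 0 < P 0 0) (hq : 0 < P 0 1) (hA : ∀ i j, 0 ≤ A i j) (hAdet : 0 < A.det) :
    (1 + (A 1 0 / A 0 0) * (P 0 1 / P 0 0))⁻¹ ∈ Set.Ioc (0 : ℝ) 1 ∧
    (1 + (A 0 1 / A 1 1) * (P 0 0 / P 0 1))⁻¹ ∈ Set.Ioc (0 : ℝ) 1 ∧
    (1 - (A 1 0 / A 0 0) * (A 0 1 / A 1 1)) ∈ Set.Ioc (0 : ℝ) 1 ∧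
    (P * A) 1 1 / (P * A) 0 1 - (P * A) 1 0 / (P * A) 0 0 =
      (1 + (A 1 0 / A 0 0) * (P 0 1 / P 0 0))⁻¹ *
      (1 + (A 0 1 / A 1 1) * (P 0 0 / P 0 1))⁻¹ *
      (1 - (A 1 0 / A 0 0) * (A 0 1 / A 1 1)) *
      (P 1 1 / P 0 1 - P 1 0 / P 0 0) := by
  obtain ⟨ha, hd⟩ := diag_pos_of_nonneg_of_det_pos hA hAdet
  have hb := hA 0 1
  have hc := hA 1 0
  have hp' : 0 < (P * A) 0 0 := by
    simp only [mul_apply, Fin.sum_univ_two]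
    positivity
  have hq' : 0 < (P * A) 0 1 := by
    simp only [mul_apply, Fin.sum_univ_two]
    positivity
  have hγ : 1 - A 1 0 / A 0 0 * (A 0 1 / A 1 1) ∈ Set.Ioc (0 : ℝ) 1 := by
    rw [one_sub_div_mul_div_eq_det_div A ha.ne' hd.ne', Set.mem_Ioc,
      div_le_one (by positivity)]
    refine ⟨by positivity, ?_⟩
    rw [det_fin_two]
    nlinarith [mul_nonneg hb hc]
  exact ⟨inv_one_add_mem_Ioc (by positivity), inv_one_add_mem_Ioc (by positivity), hγ,
    slopeIntervalLength_mul P A hp.ne' hq.ne' ha.ne' hd.ne' hp'.ne' hq'.ne'⟩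

/-- The contraction identity for the slope-interval length under right multiplication:
`|I(PA)| = α β γ |I(P)|` with `α, β, γ ∈ (0, 1]`. -/
theorem stmt6 (P A : Matrix (Fin 2) (Fin 2) ℝ) (hP : ∀ i j, 0 ≤ P i j) (hPdet : 0 < P.det)
    (hp : 0 < P 0 0) (hq : 0 < P 0 1) (hA : ∀ i j, 0 ≤ A i j) (hAdet : 0 < A.det) :
    (1 + (A 1 0 / A 0 0) * (P 0 1 / P 0 0))⁻¹ ∈ Set.Ioc (0 : ℝ) 1 ∧
    (1 + (A 0 1 / A 1 1) * (P 0 0 / P 0 1))⁻¹ ∈ Set.Ioc (0 : ℝ) 1 ∧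
    (1 - (A 1 0 / A 0 0) * (A 0 1 / A 1 1)) ∈ Set.Ioc (0 : ℝ) 1 ∧
    (P * A) 1 1 / (P * A) 0 1 - (P * A) 1 0 / (P * A) 0 0 =
      (1 + (A 1 0 / A 0 0) * (P 0 1 / P 0 0))⁻¹ *
      (1 + (A 0 1 / A 1 1) * (P 0 0 / P 0 1))⁻¹ *
      (1 - (A 1 0 / A 0 0) * (A 0 1 / A 1 1)) *
      (P 1 1 / P 0 1 - P 1 0 / P 0 0) :=
  stmt6_general P A hp hq hA hAdet
end

section
/- Let (Aₙ)ₙ≥1 be a sequence of 2×2 nonnegative matrices with positive determinant, each taken from a fixed finite set, and write A₁⋯Aₙ = (pₙ qₙ; rₙ sₙ), assuming p₁, q₁ > 0. If the sequence of interval lengths |Iₙ| = sₙ/qₙ − rₙ/pₙ converges to 0, then for every nonnegative vector V with (A₁⋯Aₙ)V ≠ 0 for all n, the sequence of ratios ((A₁⋯Aₙ)V)₂ / ((A₁⋯Aₙ)V)₁ converges in [0, ∞). -/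
/-!
The slope `(M *ᵥ w) 1 / (M *ᵥ w) 0` of the image of a nonnegative vector is a mediant of the
slopes `M 1 0 / M 0 0` and `M 1 1 / M 0 1` of the columns of `M`, so it lies between them when
`det M ≥ 0`. Since the columns of `Y (n + 1) = Y n * A (n + 1)` are images of nonnegative
vectors under `Y n`, the slope intervals of the partial products are nested; their lengths tend
to `0`, so they shrink to a point, and the slope of `Y n *ᵥ V` is trapped in them.
-/

open Matrix Filter Topology Set

/-- `[r / p, s / q]` for `M = (p q; r s)`; for `M = A₁⋯Aₙ` this is `Iₙ`. -/
def slopeInterval (M : Matrix (Fin 2) (Fin 2) ℝ) : Set ℝ :=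
  Icc (M 1 0 / M 0 0) (M 1 1 / M 0 1)

lemma mediant_mem_Icc {p q r s a c : ℝ} (hp : 0 < p) (hq : 0 < q) (ha : 0 ≤ a) (hc : 0 ≤ c)
    (hrs : r * q ≤ s * p) (hden : 0 < p * a + q * c) :
    (r * a + s * c) / (p * a + q * c) ∈ Icc (r / p) (s / q) := by
  constructor
  · rw [div_le_div_iff₀ hp hden]; nlinarith
  · rw [div_le_div_iff₀ hden hq]; nlinarith

namespace Matrix

variable {M B : Matrix (Fin 2) (Fin 2) ℝ} {w : Fin 2 → ℝ}

lemma mulVec_fin_two_apply (M : Matrix (Fin 2) (Fin 2) ℝ) (w : Fin 2 → ℝ) (i : Fin 2) :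
    (M *ᵥ w) i = M i 0 * w 0 + M i 1 * w 1 := by
  simp [mulVec, dotProduct, Fin.sum_univ_two]

lemma mul_apply_eq_mulVec_col (M B : Matrix (Fin 2) (Fin 2) ℝ) (i j : Fin 2) :
    (M * B) i j = (M *ᵥ fun k => B k j) i := by
  simp [mul_apply, mulVec, dotProduct]

lemma diag_pos_of_nonneg_of_det_pos_s9 (hB : ∀ i j, 0 ≤ B i j) (hdet : 0 < B.det) :
    0 < B 0 0 ∧ 0 < B 1 1 := by
  rw [det_fin_two] at hdet
  have hprod : 0 < B 0 0 * B 1 1 := by nlinarith [mul_nonneg (hB 0 1) (hB 1 0)]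
  exact (pos_and_pos_or_neg_and_neg_of_mul_pos hprod).resolve_right
    fun h => (hB 0 0).not_gt h.1

lemma mulVec_apply_zero_pos (hM : ∀ j, 0 < M 0 j) (hw : 0 ≤ w) (hw0 : w ≠ 0) :
    0 < (M *ᵥ w) 0 := by
  rw [mulVec_fin_two_apply]
  have hw' : 0 < w 0 ∨ 0 < w 1 := by
    by_contra! h
    exact hw0 (funext fun i => by
      fin_cases i
      exacts [le_antisymm h.1 (hw 0), le_antisymm h.2 (hw 1)])
  rcases hw' with h | h
  · nlinarith [mul_nonneg (hM 1).le (hw 1), hM 0]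
  · nlinarith [mul_nonneg (hM 0).le (hw 0), hM 1]

lemma mulVec_slope_mem_slopeInterval (hM : ∀ j, 0 < M 0 j) (hdet : 0 ≤ M.det) (hw : 0 ≤ w)
    (hw0 : w ≠ 0) : (M *ᵥ w) 1 / (M *ᵥ w) 0 ∈ slopeInterval M := by
  have hden := mulVec_apply_zero_pos hM hw hw0
  rw [mulVec_fin_two_apply] at hden
  rw [det_fin_two] at hdet
  simpa only [slopeInterval, mulVec_fin_two_apply] using
    mediant_mem_Icc (hM 0) (hM 1) (hw 0) (hw 1) (by linarith) hden

lemma col_nonneg_ne_zero (hB : ∀ i j, 0 ≤ B i j) (hdet : 0 < B.det) (j : Fin 2) :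
    (0 ≤ fun k => B k j) ∧ (fun k => B k j) ≠ 0 := by
  refine ⟨fun k => hB k j, fun h => ?_⟩
  have hdiag := diag_pos_of_nonneg_of_det_pos_s9 hB hdet
  have hjj := congrFun h j
  fin_cases j
  exacts [hdiag.1.ne' hjj, hdiag.2.ne' hjj]

lemma mul_apply_zero_pos (hM : ∀ j, 0 < M 0 j) (hB : ∀ i j, 0 ≤ B i j) (hdet : 0 < B.det) :
    ∀ j, 0 < (M * B) 0 j := fun j => by
  rw [mul_apply_eq_mulVec_col]
  exact mulVec_apply_zero_pos hM (col_nonneg_ne_zero hB hdet j).1 (col_nonneg_ne_zero hB hdet j).2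

lemma slopeInterval_mul_subset (hM : ∀ j, 0 < M 0 j) (hMdet : 0 ≤ M.det)
    (hB : ∀ i j, 0 ≤ B i j) (hdet : 0 < B.det) :
    slopeInterval (M * B) ⊆ slopeInterval M := by
  have hcol (j : Fin 2) : (M * B) 1 j / (M * B) 0 j ∈ slopeInterval M := by
    simp only [mul_apply_eq_mulVec_col]
    exact mulVec_slope_mem_slopeInterval hM hMdet (col_nonneg_ne_zero hB hdet j).1
      (col_nonneg_ne_zero hB hdet j).2
  exact Icc_subset_Icc (hcol 0).1 (hcol 1).2

end Matrix

lemma exists_tendsto_of_mem_Icc_of_monotone_of_antitone {u v f : ℕ → ℝ} (hu : Monotone u)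
    (hv : Antitone v) (hf : ∀ n, f n ∈ Icc (u n) (v n))
    (hlen : Tendsto (fun n => v n - u n) atTop (𝓝 0)) :
    ∃ L, u 0 ≤ L ∧ Tendsto f atTop (𝓝 L) := by
  have hbdd : BddAbove (range u) :=
    ⟨v 0, by rintro _ ⟨n, rfl⟩; exact (hf n).1.trans ((hf n).2.trans (hv n.zero_le))⟩
  have hu_lim : Tendsto u atTop (𝓝 (⨆ n, u n)) := tendsto_atTop_ciSup hu hbdd
  have hv_lim : Tendsto v atTop (𝓝 (⨆ n, u n)) := by
    simpa using hlen.add hu_lim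
  exact ⟨⨆ n, u n, le_ciSup hbdd 0, tendsto_of_tendsto_of_tendsto_of_le_of_le hu_lim hv_lim
    (fun n => (hf n).1) (fun n => (hf n).2)⟩

theorem stmt9_general (A : ℕ → Matrix (Fin 2) (Fin 2) ℝ)
    (hA : ∀ n i j, 0 ≤ A n i j) (hdet : ∀ n, 0 < (A n).det)
    (Y : ℕ → Matrix (Fin 2) (Fin 2) ℝ)
    (hY : ∀ n, Y n = ((List.range n).map (fun i => A (i + 1))).prod)
    (hp1 : 0 < Y 1 0 0) (hq1 : 0 < Y 1 0 1)
    (hI : Tendsto (fun n => Y n 1 1 / Y n 0 1 - Y n 1 0 / Y n 0 0) atTop (nhds 0))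
    (V : Fin 2 → ℝ) (hV : ∀ i, 0 ≤ V i) (hYV : ∀ n, (Y n).mulVec V ≠ 0) :
    ∃ L : ℝ, 0 ≤ L ∧
      Tendsto (fun n => (Y n).mulVec V 1 / (Y n).mulVec V 0) atTop (nhds L) := by
  have hstep (n : ℕ) : Y (n + 1) = Y n * A (n + 1) := by
    rw [hY, hY, List.range_succ, List.map_append, List.prod_append]
    simp
  have hY1 : Y 1 = A 1 := by simpa [hY 0] using hstep 0
  -- Everything is indexed from `Y 1`: `Y 0 = 1` has `q₀ = 0`, so `I₀` is a junk interval.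
  have htop (n : ℕ) : ∀ j, 0 < Y (n + 1) 0 j := by
    induction n with
    | zero => exact Fin.forall_fin_two.mpr ⟨hp1, hq1⟩
    | succ n ih => rw [hstep]; exact mul_apply_zero_pos ih (hA _) (hdet _)
  have hdetY (n : ℕ) : 0 < (Y n).det := by
    induction n with
    | zero => simp [hY 0]
    | succ n ih => rw [hstep, det_mul]; exact mul_pos ih (hdet _)
  have hnested (n : ℕ) : slopeInterval (Y (n + 2)) ⊆ slopeInterval (Y (n + 1)) := by
    rw [hstep (n + 1)]
    exact slopeInterval_mul_subset (htop n) (hdetY _).le (hA _) (hdet _)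
  have hV0 : V ≠ 0 := fun h => hYV 0 (by rw [h, mulVec_zero])
  have hslope (n : ℕ) : (Y (n + 1) *ᵥ V) 1 / (Y (n + 1) *ᵥ V) 0 ∈ slopeInterval (Y (n + 1)) :=
    mulVec_slope_mem_slopeInterval (htop n) (hdetY _).le hV hV0
  have hends (n : ℕ) :=
    (Icc_subset_Icc_iff (nonempty_Icc.mp ⟨_, hslope (n + 1)⟩)).mp (hnested n)
  obtain ⟨L, hL, hlim⟩ := exists_tendsto_of_mem_Icc_of_monotone_of_antitone
    (monotone_nat_of_le_succ fun n => (hends n).1)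
    (antitone_nat_of_succ_le fun n => (hends n).2)
    hslope ((tendsto_add_atTop_iff_nat 1).mpr hI)
  exact ⟨L, le_trans (by rw [hY1]; exact div_nonneg (hA 1 1 0) (hA 1 0 0)) hL,
    (tendsto_add_atTop_iff_nat 1).mp hlim⟩

/-- If the slope-interval lengths of the partial products `A₁⋯Aₙ` tend to `0`, then for every
nonnegative vector `V` with `(A₁⋯Aₙ)V ≠ 0` for all `n`, the ratio of the coordinates of
`(A₁⋯Aₙ)V` converges in `[0,∞)`. -/
theorem stmt9 (A : ℕ → Matrix (Fin 2) (Fin 2) ℝ) (S : Finset (Matrix (Fin 2) (Fin 2) ℝ))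
    (hS : ∀ n, A n ∈ S) (hA : ∀ n i j, 0 ≤ A n i j) (hdet : ∀ n, 0 < (A n).det)
    (Y : ℕ → Matrix (Fin 2) (Fin 2) ℝ)
    (hY : ∀ n, Y n = ((List.range n).map (fun i => A (i + 1))).prod)
    (hp1 : 0 < Y 1 0 0) (hq1 : 0 < Y 1 0 1)
    (hI : Tendsto (fun n => Y n 1 1 / Y n 0 1 - Y n 1 0 / Y n 0 0) atTop (nhds 0))
    (V : Fin 2 → ℝ) (hV : ∀ i, 0 ≤ V i) (hYV : ∀ n, (Y n).mulVec V ≠ 0) :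
    ∃ L : ℝ, 0 ≤ L ∧
      Tendsto (fun n => (Y n).mulVec V 1 / (Y n).mulVec V 0) atTop (nhds L) :=
  stmt9_general A hA hdet Y hY hp1 hq1 hI V hV hYV
end

section
/- Let M_k = (a 0; 0 d) and M_ℓ = (α 0; 0 δ) be diagonal matrices with a > d > 0 and 0 < α < δ. Then there exists a sequence (ωₙ) with values in {k, ℓ} such that for every positive vector V = (v₁; v₂), the sequence of ratios (M_{ω₁}⋯M_{ωₙ}V)₂/(M_{ω₁}⋯M_{ωₙ}V)₁ diverges (does not converge in [0,∞]). -/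
open Matrix Filter Topology Finset

/-! The products `Yₙ = M_{ω₁} ⋯ M_{ωₙ}` are diagonal, so the direction of `Yₙ V` is governed
by the ratio `ρₙ` of the diagonal entries of `Yₙ`, a product of factors `d/a < 1` and `δ/α > 1`.
A hysteresis rule — multiply by `d/a` until `ρₙ ≤ 1/n`, then by `δ/α` until `ρₙ ≥ n` — switches
infinitely often, because `n (d/a)ⁿ → 0` and `n / (δ/α)ⁿ → 0`. Hence `ρₙ` is infinitely often
arbitrarily small and arbitrarily large, and the first coordinate `V₀ / (V₀ + ρₙ V₁)` of the
normalized vector is infinitely often `≥ 3/4` and infinitely often `≤ 1/4`. -/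

theorem Nat.frequently_atTop_and_not_succ {p : ℕ → Prop} (h₁ : ∃ᶠ n in atTop, p n)
    (h₂ : ∃ᶠ n in atTop, ¬ p n) : ∃ᶠ n in atTop, p n ∧ ¬ p (n + 1) := by
  rw [frequently_atTop] at *
  intro N
  obtain ⟨m, hm, hpm⟩ := h₁ N
  obtain ⟨k, hk, hpk⟩ := h₂ m
  obtain ⟨j, hj, hj'⟩ := Nat.exists_not_and_succ_of_not_zero_of_exists
    (p := fun j => ¬ p (m + j)) (by simpa using hpm) ⟨k - m, by rwa [Nat.add_sub_cancel' hk]⟩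
  exact ⟨m + j, by omega, not_not.1 hj, hj'⟩

theorem exists_eq_mul_pow_of_forall_ge {G₀ : Type*} [GroupWithZero G₀] {f : ℕ → G₀} {c : G₀}
    (hc : c ≠ 0) {N : ℕ} (h : ∀ n ≥ N, f (n + 1) = f n * c) : ∃ C, ∀ n ≥ N, f n = C * c ^ n := by
  refine ⟨f N / c ^ N, fun n hn => ?_⟩
  induction n, hn using Nat.le_induction with
  | base => exact (div_mul_cancel₀ _ (pow_ne_zero N hc)).symm
  | succ n hn ih => rw [h n hn, ih, pow_succ, mul_assoc]

noncomputable def zigzag (u w : ℝ) : ℕ → ℝ × Bool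
  | 0 => (1, true)
  | n + 1 =>
    let ρ := (zigzag u w n).1 * if (zigzag u w n).2 then u else w
    (ρ, if ρ ≤ ((n : ℝ) + 1)⁻¹ then false else if (n : ℝ) + 1 ≤ ρ then true else (zigzag u w n).2)

namespace zigzag

variable {u w : ℝ}

theorem fst_succ (n : ℕ) :
    (zigzag u w (n + 1)).1 = (zigzag u w n).1 * if (zigzag u w n).2 then u else w := rfl

theorem snd_succ (n : ℕ) : (zigzag u w (n + 1)).2 =
    if (zigzag u w (n + 1)).1 ≤ ((n : ℝ) + 1)⁻¹ then false
    else if (n : ℝ) + 1 ≤ (zigzag u w (n + 1)).1 then true else (zigzag u w n).2 := rfl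

theorem fst_eq_prod (n : ℕ) :
    (zigzag u w n).1 = ∏ i ∈ range n, if (zigzag u w i).2 then u else w := by
  induction n with
  | zero => rfl
  | succ n ih => rw [fst_succ, ih, prod_range_succ]

theorem fst_pos (hu : 0 < u) (hw : 0 < w) (n : ℕ) : 0 < (zigzag u w n).1 := by
  rw [fst_eq_prod]
  exact prod_pos fun i _ => by split_ifs <;> assumption

theorem snd_succ_eq_false {n : ℕ} (h : (zigzag u w (n + 1)).1 ≤ ((n : ℝ) + 1)⁻¹) :
    (zigzag u w (n + 1)).2 = false := by
  rw [snd_succ, if_pos h]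

theorem snd_succ_eq_true {n : ℕ} (h : (n : ℝ) + 1 < (zigzag u w (n + 1)).1) :
    (zigzag u w (n + 1)).2 = true := by
  have : ((n : ℝ) + 1)⁻¹ ≤ 1 := inv_le_one_of_one_le₀ (by linarith [n.cast_nonneg (α := ℝ)])
  rw [snd_succ, if_neg (by linarith), if_pos h.le]

theorem fst_le_of_snd_true_of_snd_false {n : ℕ} (h₁ : (zigzag u w n).2 = true)
    (h₂ : (zigzag u w (n + 1)).2 = false) : (zigzag u w (n + 1)).1 ≤ ((n : ℝ) + 1)⁻¹ := by
  rw [snd_succ] at h₂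
  split_ifs at h₂ with h
  · exact h
  · simp_all

theorem le_fst_of_snd_false_of_snd_true {n : ℕ} (h₁ : (zigzag u w n).2 = false)
    (h₂ : (zigzag u w (n + 1)).2 = true) : (n : ℝ) + 1 ≤ (zigzag u w (n + 1)).1 := by
  rw [snd_succ] at h₂
  split_ifs at h₂ with h h'
  · exact h'
  · simp_all

theorem frequently_snd_eq_false (hu₀ : 0 < u) (hu : u < 1) :
    ∃ᶠ n in atTop, (zigzag u w n).2 = false := by
  by_contra h
  obtain ⟨N, hN⟩ := eventually_atTop.1 (not_frequently.1 h)
  simp only [Bool.not_eq_false] at hN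
  obtain ⟨C, hC⟩ := exists_eq_mul_pow_of_forall_ge (f := fun n => (zigzag u w n).1) hu₀.ne'
    fun n hn => by simp only [fst_succ, hN n hn, if_true]
  have hlim : Tendsto (fun n : ℕ => C * (n * u ^ n)) atTop (𝓝 0) := by
    simpa using (tendsto_self_mul_const_pow_of_lt_one hu₀.le hu).const_mul C
  obtain ⟨n, hsmall, hn⟩ := ((tendsto_add_atTop_nat 1).eventually
    ((hlim.eventually (gt_mem_nhds one_pos)).and (eventually_ge_atTop N))).exists
  have hρ : (zigzag u w (n + 1)).1 ≤ ((n : ℝ) + 1)⁻¹ := by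
    rw [hC _ (by omega)]
    push_cast at hsmall
    rw [inv_eq_one_div, le_div_iff₀ (by positivity)]
    linarith
  simpa [hN (n + 1) (by omega)] using snd_succ_eq_false hρ

theorem frequently_snd_eq_true (hu₀ : 0 < u) (hw : 1 < w) :
    ∃ᶠ n in atTop, (zigzag u w n).2 = true := by
  by_contra h
  obtain ⟨N, hN⟩ := eventually_atTop.1 (not_frequently.1 h)
  simp only [Bool.not_eq_true] at hN
  obtain ⟨C, hC⟩ := exists_eq_mul_pow_of_forall_ge (f := fun n => (zigzag u w n).1)
    (zero_lt_one.trans hw).ne' fun n hn => by simp only [fst_succ, hN n hn]; rfl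
  have hC₀ : 0 < C := by
    have := fst_pos hu₀ (zero_lt_one.trans hw) N
    rw [hC N le_rfl] at this
    exact pos_of_mul_pos_left this (by positivity)
  have hlim := tendsto_pow_const_div_const_pow_of_one_lt 1 hw
  obtain ⟨n, hlarge, hn⟩ := ((tendsto_add_atTop_nat 1).eventually
    ((hlim.eventually (gt_mem_nhds hC₀)).and (eventually_ge_atTop N))).exists
  have hρ : (n : ℝ) + 1 < (zigzag u w (n + 1)).1 := by
    rw [hC _ (by omega)]
    push_cast at hlarge
    rwa [pow_one, div_lt_iff₀ (by positivity)] at hlarge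
  simpa [hN (n + 1) (by omega)] using snd_succ_eq_true hρ

theorem frequently_fst_le (hu₀ : 0 < u) (hu : u < 1) (hw : 1 < w) {ε : ℝ} (hε : 0 < ε) :
    ∃ᶠ n in atTop, (zigzag u w n).1 ≤ ε := by
  have hturn := Nat.frequently_atTop_and_not_succ (frequently_snd_eq_true hu₀ hw)
    (by simpa using frequently_snd_eq_false (w := w) hu₀ hu)
  have hsmall : ∀ᶠ n : ℕ in atTop, ((n : ℝ) + 1)⁻¹ ≤ ε := by
    simpa using (tendsto_one_div_add_atTop_nhds_zero_nat.eventually (ge_mem_nhds hε))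
  refine (tendsto_add_atTop_nat 1).frequently ((hturn.and_eventually hsmall).mono ?_)
  rintro n ⟨⟨h₁, h₂⟩, hn⟩
  exact (fst_le_of_snd_true_of_snd_false h₁ (by simpa using h₂)).trans hn

theorem frequently_le_fst (hu₀ : 0 < u) (hu : u < 1) (hw : 1 < w) (M : ℝ) :
    ∃ᶠ n in atTop, M ≤ (zigzag u w n).1 := by
  have hturn := Nat.frequently_atTop_and_not_succ (frequently_snd_eq_false (w := w) hu₀ hu)
    (by simpa using frequently_snd_eq_true hu₀ hw)
  refine (tendsto_add_atTop_nat 1).frequently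
    ((hturn.and_eventually (tendsto_natCast_atTop_atTop.eventually_ge_atTop M)).mono ?_)
  rintro n ⟨⟨h₁, h₂⟩, hn⟩
  exact hn.trans ((le_add_of_nonneg_right zero_le_one).trans
    (le_fst_of_snd_false_of_snd_true h₁ (by simpa using h₂)))

end zigzag

theorem exists_frequently_prod_le_and_frequently_le_prod {u w : ℝ} (hu₀ : 0 < u) (hu : u < 1)
    (hw : 1 < w) : ∃ b : ℕ → Bool,
      (∀ ε > 0, ∃ᶠ n in atTop, ∏ i ∈ range n, (if b i then u else w) ≤ ε) ∧
      ∀ M, ∃ᶠ n in atTop, M ≤ ∏ i ∈ range n, if b i then u else w :=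
  ⟨fun n => (zigzag u w n).2,
    fun _ hε => by simpa only [zigzag.fst_eq_prod] using zigzag.frequently_fst_le hu₀ hu hw hε,
    fun M => by simpa only [zigzag.fst_eq_prod] using zigzag.frequently_le_fst hu₀ hu hw M⟩

theorem Matrix.list_prod_map_diagonal {m R : Type*} [Fintype m] [DecidableEq m] [CommSemiring R]
    (x : ℕ → m → R) (n : ℕ) :
    ((List.range n).map fun i => diagonal (x i)).prod = diagonal (∏ i ∈ range n, x i) := by
  induction n with
  | zero => simp
  | succ n ih => simp [List.range_succ, ih, prod_range_succ]

theorem not_tendsto_div_add_mul {ι : Type*} {F : Filter ι} {p q : ℝ} (hp : 0 < p) (hq : 0 < q)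
    {ρ : ι → ℝ} (hρ : ∀ i, 0 ≤ ρ i) (hsmall : ∀ ε > 0, ∃ᶠ i in F, ρ i ≤ ε)
    (hlarge : ∀ M, ∃ᶠ i in F, M ≤ ρ i) (l : ℝ) :
    ¬ Tendsto (fun i => p / (p + ρ i * q)) F (𝓝 l) := by
  intro hl
  have h₁ : l ∈ Set.Ici (3 / 4 : ℝ) := by
    rw [← closure_Ici]
    refine mem_closure_of_frequently_of_tendsto ((hsmall (p / (3 * q)) (by positivity)).mono
      fun i hi => ?_) hl
    rw [Set.mem_Ici, le_div_iff₀ (by nlinarith [hρ i]), ← sub_nonneg]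
    rw [le_div_iff₀ (by positivity)] at hi
    nlinarith
  have h₂ : l ∈ Set.Iic (1 / 4 : ℝ) := by
    rw [← closure_Iic]
    refine mem_closure_of_frequently_of_tendsto ((hlarge (3 * p / q)).mono fun i hi => ?_) hl
    rw [Set.mem_Iic, div_le_iff₀ (by nlinarith [hρ i])]
    rw [div_le_iff₀ hq] at hi
    nlinarith
  exact absurd (h₁.out.trans h₂.out) (by norm_num)

/-- Given two diagonal matrices `M_k = diag(a,d)` with `a > d > 0` and `M_ℓ = diag(α,δ)` with
`0 < α < δ`, there is a sequence of choices among them such that for every positive vector `V`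
the normalized products `YₙV/‖YₙV‖` (sum norm) do not converge, i.e. the ratio sequence
diverges in `[0,∞]`. -/
theorem stmt16 (a d α δ : ℝ) (hd : 0 < d) (had : d < a) (hα : 0 < α) (hαδ : α < δ)
    (Mk Ml : Matrix (Fin 2) (Fin 2) ℝ) (hMk : Mk = !![a, 0; 0, d]) (hMl : Ml = !![α, 0; 0, δ]) :
    ∃ ω : ℕ → Matrix (Fin 2) (Fin 2) ℝ, (∀ n, ω n = Mk ∨ ω n = Ml) ∧
      ∀ V : Fin 2 → ℝ, 0 < V 0 → 0 < V 1 →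
        ¬ ∃ L : Fin 2 → ℝ,
          Tendsto (fun n =>
            (∑ i, (((List.range n).map ω).prod.mulVec V) i)⁻¹ •
              ((List.range n).map ω).prod.mulVec V) atTop (nhds L) := by
  have ha : 0 < a := hd.trans had
  have hδ : 0 < δ := hα.trans hαδ
  obtain ⟨b, hsmall, hlarge⟩ := exists_frequently_prod_le_and_frequently_le_prod
    (div_pos hd ha) ((div_lt_one ha).2 had) ((one_lt_div hα).2 hαδ)
  set x : ℕ → Fin 2 → ℝ := fun n => if b n then ![a, d] else ![α, δ]
  refine ⟨fun n => diagonal (x n),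
    fun n => by cases hb : b n <;> simp [x, hb, hMk, hMl, diagonal_fin_two], ?_⟩
  rintro V hV₀ hV₁ ⟨L, hL⟩
  set ρ : ℕ → ℝ := fun n => ∏ i ∈ range n, if b i then d / a else δ / α
  have hx₀ : ∀ n, 0 < ∏ i ∈ range n, x i 0 := fun n =>
    prod_pos fun i _ => by cases hb : b i <;> simpa [x, hb]
  have hx₁ : ∀ n, ∏ i ∈ range n, x i 1 = ρ n * ∏ i ∈ range n, x i 0 := fun n => by
    rw [← prod_mul_distrib]
    refine prod_congr rfl fun i _ => ?_
    cases hb : b i <;> simp [x, hb] <;> field_simp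
  refine not_tendsto_div_add_mul hV₀ hV₁
    (fun n => prod_nonneg fun i _ => by split_ifs <;> positivity) hsmall hlarge (L 0)
    (((continuous_apply 0).tendsto L).comp hL |>.congr fun n => ?_)
  simp only [Function.comp_apply, Pi.smul_apply, smul_eq_mul, Fin.sum_univ_two,
    list_prod_map_diagonal, mulVec_diagonal, Finset.prod_apply, hx₁]
  rw [inv_mul_eq_div, ← mul_div_mul_left (V 0) _ (hx₀ n).ne']
  ring
end

section
/- Let M_k = (a 0; 0 d) be diagonal with a, d > 0 and a ≠ d, M_{h''} = (0 β; γ 0) with β, γ > 0, and V = (v₁; 0) with v₁ > 0. Define ω by ω_{i_j} = h'' and ωₙ = k for n ∈ (i_j, i_{j+1}), for some increasing sequence 1 = i₁ < i₂ < ⋯. Then Y_{i_j} = M_{ω₁}⋯M_{ω_{i_j}} is antidiagonal for j odd and diagonal for j even, and consequently (Y_{i_j}V)₂/(Y_{i_j}V)₁ is alternately ∞ and 0, so the ratio sequence diverges. -/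
/-!
Multiplying on the right by a diagonal matrix with positive diagonal preserves both the
"positive diagonal" and the "positive antidiagonal" sign patterns, while a positive antidiagonal
factor swaps them. Along `ω` the product therefore switches pattern exactly at the positions
`i_j`: it is antidiagonal at `i_j` for odd `j` and diagonal for even `j`. Applied to `(v₁; 0)`
this leaves only the second, respectively only the first, coordinate nonzero, so the normalised
vectors alternate between `(0, 1)` and `(1, 0)` along a sequence of times tending to infinity.
-/

open Matrix Filter Topology

namespace Matrix

variable {R : Type*} [Semiring R]

theorem mul_fin_two_apply (X Y : Matrix (Fin 2) (Fin 2) R) (p q : Fin 2) :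
    (X * Y) p q = X p 0 * Y 0 q + X p 1 * Y 1 q := by
  simp [mul_apply, Fin.sum_univ_two]

variable [PartialOrder R]

def IsPosDiagonal (Y : Matrix (Fin 2) (Fin 2) R) : Prop :=
  0 < Y 0 0 ∧ 0 < Y 1 1 ∧ Y 0 1 = 0 ∧ Y 1 0 = 0

def IsPosAntidiagonal (Y : Matrix (Fin 2) (Fin 2) R) : Prop :=
  0 < Y 0 1 ∧ 0 < Y 1 0 ∧ Y 0 0 = 0 ∧ Y 1 1 = 0

theorem isPosDiagonal_of_pos {a d : R} (ha : 0 < a) (hd : 0 < d) :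
    IsPosDiagonal !![a, 0; 0, d] := by
  simp [IsPosDiagonal, ha, hd]

theorem isPosAntidiagonal_of_pos {β γ : R} (hβ : 0 < β) (hγ : 0 < γ) :
    IsPosAntidiagonal !![0, β; γ, 0] := by
  simp [IsPosAntidiagonal, hβ, hγ]

variable [IsStrictOrderedRing R] {X Y : Matrix (Fin 2) (Fin 2) R}

theorem isPosDiagonal_one : IsPosDiagonal (1 : Matrix (Fin 2) (Fin 2) R) := by
  simp [IsPosDiagonal]

theorem IsPosDiagonal.mul (hX : IsPosDiagonal X) (hY : IsPosDiagonal Y) :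
    IsPosDiagonal (X * Y) := by
  obtain ⟨hX₀₀, hX₁₁, hX₀₁, hX₁₀⟩ := hX
  obtain ⟨hY₀₀, hY₁₁, hY₀₁, hY₁₀⟩ := hY
  simp only [IsPosDiagonal, mul_fin_two_apply, hX₀₁, hX₁₀, hY₀₁, hY₁₀, zero_mul, mul_zero,
    add_zero, zero_add]
  exact ⟨mul_pos hX₀₀ hY₀₀, mul_pos hX₁₁ hY₁₁, trivial, trivial⟩

theorem IsPosAntidiagonal.mul_isPosDiagonal (hX : IsPosAntidiagonal X) (hY : IsPosDiagonal Y) :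
    IsPosAntidiagonal (X * Y) := by
  obtain ⟨hX₀₁, hX₁₀, hX₀₀, hX₁₁⟩ := hX
  obtain ⟨hY₀₀, hY₁₁, hY₀₁, hY₁₀⟩ := hY
  simp only [IsPosAntidiagonal, mul_fin_two_apply, hX₀₀, hX₁₁, hY₀₁, hY₁₀, zero_mul, mul_zero,
    add_zero, zero_add]
  exact ⟨mul_pos hX₀₁ hY₁₁, mul_pos hX₁₀ hY₀₀, trivial, trivial⟩

theorem IsPosDiagonal.mul_isPosAntidiagonal (hX : IsPosDiagonal X) (hY : IsPosAntidiagonal Y) :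
    IsPosAntidiagonal (X * Y) := by
  obtain ⟨hX₀₀, hX₁₁, hX₀₁, hX₁₀⟩ := hX
  obtain ⟨hY₀₁, hY₁₀, hY₀₀, hY₁₁⟩ := hY
  simp only [IsPosAntidiagonal, mul_fin_two_apply, hX₀₁, hX₁₀, hY₀₀, hY₁₁, zero_mul, mul_zero,
    add_zero, zero_add]
  exact ⟨mul_pos hX₀₀ hY₀₁, mul_pos hX₁₁ hY₁₀, trivial, trivial⟩

theorem IsPosAntidiagonal.mul (hX : IsPosAntidiagonal X) (hY : IsPosAntidiagonal Y) :
    IsPosDiagonal (X * Y) := by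
  obtain ⟨hX₀₁, hX₁₀, hX₀₀, hX₁₁⟩ := hX
  obtain ⟨hY₀₁, hY₁₀, hY₀₀, hY₁₁⟩ := hY
  simp only [IsPosDiagonal, mul_fin_two_apply, hX₀₀, hX₁₁, hY₀₀, hY₁₁, zero_mul, mul_zero,
    add_zero, zero_add]
  exact ⟨mul_pos hX₀₁ hY₁₀, mul_pos hX₁₀ hY₀₁, trivial, trivial⟩

theorem IsPosDiagonal.mulVec_vecCons_zero (hY : IsPosDiagonal Y) {v : R} (hv : 0 < v) :
    (Y *ᵥ ![v, 0]) 1 = 0 ∧ 0 < (Y *ᵥ ![v, 0]) 0 := by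
  simp [hY.2.2.2, mul_pos hY.1 hv]

theorem IsPosAntidiagonal.mulVec_vecCons_zero (hY : IsPosAntidiagonal Y) {v : R} (hv : 0 < v) :
    (Y *ᵥ ![v, 0]) 0 = 0 ∧ 0 < (Y *ᵥ ![v, 0]) 1 := by
  simp [hY.2.2.1, mul_pos hY.2.1 hv]

end Matrix

theorem StrictMono.notMem_range_of_lt_of_lt {s : ℕ → ℕ} (hs : StrictMono s) {k m : ℕ}
    (hkm : s k < m) (hmk : m < s (k + 1)) : m ∉ Set.range s := by
  rintro ⟨l, rfl⟩
  have := hs.lt_iff_lt.mp hkm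
  have := hs.lt_iff_lt.mp hmk
  omega

theorem StrictMono.notMem_range_of_lt_apply_zero {s : ℕ → ℕ} (hs : StrictMono s) {m : ℕ}
    (hm : m < s 0) : m ∉ Set.range s := by
  rintro ⟨l, rfl⟩
  exact (hs.monotone l.zero_le).not_gt hm

theorem holds_at_end_of_run {M : Type*} [Monoid M] {Y ω : ℕ → M}
    (hY : ∀ n, Y (n + 1) = Y n * ω (n + 1)) {P Q : M → Prop} {p q : ℕ} (hpq : p < q)
    (hrun : ∀ m, p < m → m < q → ∀ x, P x → P (x * ω m)) (hq : ∀ x, P x → Q (x * ω q))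
    (hp : P (Y p)) : Q (Y q) := by
  obtain ⟨r, rfl⟩ : ∃ r, q = r + 1 := ⟨q - 1, by omega⟩
  have hbefore : ∀ n, p ≤ n → n ≤ r → P (Y n) := by
    intro n hpn
    induction n, hpn using Nat.le_induction with
    | base => exact fun _ => hp
    | succ n hpn ih => intro hn; rw [hY]; exact hrun _ (by omega) (by omega) _ (ih (by omega))
  rw [hY]
  exact hq _ (hbefore r (by omega) le_rfl)

section Switching

variable {R : Type*} [Semiring R] [PartialOrder R] [IsStrictOrderedRing R]
  {s : ℕ → ℕ} {ω Y : ℕ → Matrix (Fin 2) (Fin 2) R}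

theorem isPosAntidiagonal_and_isPosDiagonal_at_switches (hs : StrictMono s) (hs₀ : 0 < s 0)
    (hY₀ : Y 0 = 1) (hY : ∀ n, Y (n + 1) = Y n * ω (n + 1))
    (hanti : ∀ k, IsPosAntidiagonal (ω (s k)))
    (hdiag : ∀ n, 0 < n → n ∉ Set.range s → IsPosDiagonal (ω n)) (k : ℕ) :
    IsPosAntidiagonal (Y (s (2 * k))) ∧ IsPosDiagonal (Y (s (2 * k + 1))) := by
  have hrun : ∀ {P : Matrix (Fin 2) (Fin 2) R → Prop},
      (∀ X Z, P X → IsPosDiagonal Z → P (X * Z)) →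
      ∀ k m, s k < m → m < s (k + 1) → ∀ X, P X → P (X * ω m) := fun hP k m hkm hmk X hX =>
    hP X _ hX (hdiag m (by omega) (hs.notMem_range_of_lt_of_lt hkm hmk))
  have hswitch_anti : ∀ k, IsPosDiagonal (Y (s k)) → IsPosAntidiagonal (Y (s (k + 1))) :=
    fun k => holds_at_end_of_run hY (hs (Nat.lt_succ_self k))
      (hrun (fun _ _ => IsPosDiagonal.mul) k)
      fun X hX => hX.mul_isPosAntidiagonal (hanti _)
  have hswitch_diag : ∀ k, IsPosAntidiagonal (Y (s k)) → IsPosDiagonal (Y (s (k + 1))) :=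
    fun k => holds_at_end_of_run hY (hs (Nat.lt_succ_self k))
      (hrun (fun _ _ => IsPosAntidiagonal.mul_isPosDiagonal) k) fun X hX => hX.mul (hanti _)
  have hfirst : IsPosAntidiagonal (Y (s 0)) :=
    holds_at_end_of_run hY hs₀
      (fun m hm hm0 X hX => hX.mul (hdiag m hm (hs.notMem_range_of_lt_apply_zero hm0)))
      (fun X hX => hX.mul_isPosAntidiagonal (hanti 0)) (hY₀ ▸ isPosDiagonal_one)
  induction k with
  | zero => exact ⟨hfirst, hswitch_diag 0 hfirst⟩
  | succ k ih =>
    have hanti' := hswitch_anti _ ih.2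
    exact ⟨hanti', hswitch_diag _ hanti'⟩

end Switching

theorem inv_sum_smul_eq_single {ι K : Type*} [Fintype ι] [DecidableEq ι] [Field K]
    {x : ι → K} {k : ι} (hx : ∀ l ≠ k, x l = 0) (hk : x k ≠ 0) :
    (∑ l, x l)⁻¹ • x = Pi.single k 1 := by
  rw [Fintype.sum_eq_single k hx]
  ext l
  by_cases hl : l = k
  · subst hl; simp [hk]
  · simp [hl, hx l hl]

theorem not_exists_tendsto_of_frequently_eq {X : Type*} [TopologicalSpace X] [T2Space X]
    {u : ℕ → X} {p q : X} (hpq : p ≠ q) (hp : ∃ᶠ n in atTop, u n = p)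
    (hq : ∃ᶠ n in atTop, u n = q) : ¬ ∃ L, Tendsto u atTop (𝓝 L) := by
  rintro ⟨L, hL⟩
  have hLp := tendsto_nhds_unique_of_frequently_eq hL tendsto_const_nhds hp
  have hLq := tendsto_nhds_unique_of_frequently_eq hL tendsto_const_nhds hq
  exact hpq (hLp.symm.trans hLq)

theorem not_exists_tendsto_inv_sum_smul_of_alternating {K : Type*} [Field K]
    [TopologicalSpace K] [T2Space K] {x : ℕ → Fin 2 → K} {s : ℕ → ℕ} (hs : StrictMono s)
    (hodd : ∀ k, x (s (2 * k)) 0 = 0 ∧ x (s (2 * k)) 1 ≠ 0)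
    (heven : ∀ k, x (s (2 * k + 1)) 1 = 0 ∧ x (s (2 * k + 1)) 0 ≠ 0) :
    ¬ ∃ L, Tendsto (fun n => (∑ l, x n l)⁻¹ • x n) atTop (𝓝 L) := by
  refine not_exists_tendsto_of_frequently_eq (p := Pi.single 1 1) (q := Pi.single 0 1)
    (by simp [funext_iff, Fin.forall_fin_two]) ?_ ?_
  · refine frequently_atTop.2 fun n =>
      ⟨s (2 * n), (by omega : n ≤ 2 * n).trans (hs.id_le _), ?_⟩
    exact inv_sum_smul_eq_single
      (Fin.forall_fin_two.2 ⟨fun _ => (hodd n).1, fun h => (h rfl).elim⟩) (hodd n).2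
  · refine frequently_atTop.2 fun n =>
      ⟨s (2 * n + 1), (by omega : n ≤ 2 * n + 1).trans (hs.id_le _), ?_⟩
    exact inv_sum_smul_eq_single
      (Fin.forall_fin_two.2 ⟨fun h => (h rfl).elim, fun _ => (heven n).1⟩) (heven n).2

theorem stmt17_general (a d β γ : ℝ) (ha : 0 < a) (hd : 0 < d) (hβ : 0 < β) (hγ : 0 < γ)
    (Mk Mh : Matrix (Fin 2) (Fin 2) ℝ) (hMk : Mk = !![a, 0; 0, d]) (hMh : Mh = !![0, β; γ, 0])
    (v₁ : ℝ) (hv₁ : 0 < v₁) (V : Fin 2 → ℝ) (hV : V = ![v₁, 0])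
    (i : ℕ → ℕ) (hi1 : i 1 = 1) (himono : ∀ j, 1 ≤ j → i j < i (j + 1))
    (ω : ℕ → Matrix (Fin 2) (Fin 2) ℝ)
    (hωh : ∀ j, 1 ≤ j → ω (i j) = Mh)
    (hωk : ∀ n, 1 ≤ n → (∀ j, 1 ≤ j → n ≠ i j) → ω n = Mk)
    (Y : ℕ → Matrix (Fin 2) (Fin 2) ℝ)
    (hY : ∀ n, Y n = ((List.range n).map (fun m => ω (m + 1))).prod) :
    (∀ j, 1 ≤ j → Odd j →
      Y (i j) 0 0 = 0 ∧ Y (i j) 1 1 = 0 ∧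
      (Y (i j)).mulVec V 0 = 0 ∧ 0 < (Y (i j)).mulVec V 1) ∧
    (∀ j, 1 ≤ j → Even j →
      Y (i j) 0 1 = 0 ∧ Y (i j) 1 0 = 0 ∧
      (Y (i j)).mulVec V 1 = 0 ∧ 0 < (Y (i j)).mulVec V 0) ∧
    ¬ ∃ L : Fin 2 → ℝ,
      Tendsto (fun n => (∑ k, (Y n).mulVec V k)⁻¹ • (Y n).mulVec V) atTop (nhds L) := by
  subst hMk hMh hV
  set s : ℕ → ℕ := fun k => i (k + 1)
  have hs : StrictMono s := strictMono_nat_of_lt_succ fun k => himono (k + 1) k.succ_pos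
  have hY₀ : Y 0 = 1 := by simp [hY]
  have hstep : ∀ n, Y (n + 1) = Y n * ω (n + 1) := fun n => by simp [hY, List.prod_range_succ]
  have hpattern := isPosAntidiagonal_and_isPosDiagonal_at_switches hs (by simp [s, hi1]) hY₀ hstep
    (fun k => hωh (k + 1) k.succ_pos ▸ isPosAntidiagonal_of_pos hβ hγ)
    (fun n hn hns => hωk n hn
      (fun j hj hnj => hns ⟨j - 1, by simp [s, hnj, Nat.sub_add_cancel hj]⟩)
      ▸ isPosDiagonal_of_pos ha hd)
  have hodd : ∀ k, (Y (s (2 * k))).mulVec ![v₁, 0] 0 = 0 ∧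
      0 < (Y (s (2 * k))).mulVec ![v₁, 0] 1 :=
    fun k => (hpattern k).1.mulVec_vecCons_zero hv₁
  have heven : ∀ k, (Y (s (2 * k + 1))).mulVec ![v₁, 0] 1 = 0 ∧
      0 < (Y (s (2 * k + 1))).mulVec ![v₁, 0] 0 :=
    fun k => (hpattern k).2.mulVec_vecCons_zero hv₁
  refine ⟨?_, ?_, ?_⟩
  · rintro j - ⟨k, rfl⟩
    exact ⟨(hpattern k).1.2.2.1, (hpattern k).1.2.2.2, hodd k⟩
  · rintro j hj ⟨k, rfl⟩
    obtain ⟨k, rfl⟩ : ∃ k', k = k' + 1 := ⟨k - 1, by omega⟩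
    rw [show k + 1 + (k + 1) = 2 * k + 1 + 1 by ring]
    exact ⟨(hpattern k).2.2.2.1, (hpattern k).2.2.2.2, heven k⟩
  · exact not_exists_tendsto_inv_sum_smul_of_alternating hs
      (fun k => ⟨(hodd k).1, (hodd k).2.ne'⟩) (fun k => ⟨(heven k).1, (heven k).2.ne'⟩)

/-- With `M_k` diagonal (`a, d > 0`, `a ≠ d`), `M_{h''}` antidiagonal (`β, γ > 0`),
`V = (v₁; 0)` with `v₁ > 0`, and `ω` placing `M_{h''}` exactly at positions `i₁ = 1 < i₂ < ⋯`
and `M_k` elsewhere, the product `Y_{i_j}` is antidiagonal for odd `j` and diagonal for even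
`j`, the ratio `(Y_{i_j}V)₂/(Y_{i_j}V)₁` is alternately `∞` and `0`, and the normalized
sequence `YₙV/‖YₙV‖` diverges. -/
theorem stmt17 (a d β γ : ℝ) (ha : 0 < a) (hd : 0 < d) (had : a ≠ d) (hβ : 0 < β) (hγ : 0 < γ)
    (Mk Mh : Matrix (Fin 2) (Fin 2) ℝ) (hMk : Mk = !![a, 0; 0, d]) (hMh : Mh = !![0, β; γ, 0])
    (v₁ : ℝ) (hv₁ : 0 < v₁) (V : Fin 2 → ℝ) (hV : V = ![v₁, 0])
    (i : ℕ → ℕ) (hi1 : i 1 = 1) (himono : ∀ j, 1 ≤ j → i j < i (j + 1))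
    (ω : ℕ → Matrix (Fin 2) (Fin 2) ℝ)
    (hωh : ∀ j, 1 ≤ j → ω (i j) = Mh)
    (hωk : ∀ n, 1 ≤ n → (∀ j, 1 ≤ j → n ≠ i j) → ω n = Mk)
    (Y : ℕ → Matrix (Fin 2) (Fin 2) ℝ)
    (hY : ∀ n, Y n = ((List.range n).map (fun m => ω (m + 1))).prod) :
    (∀ j, 1 ≤ j → Odd j →
      Y (i j) 0 0 = 0 ∧ Y (i j) 1 1 = 0 ∧
      (Y (i j)).mulVec V 0 = 0 ∧ 0 < (Y (i j)).mulVec V 1) ∧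
    (∀ j, 1 ≤ j → Even j →
      Y (i j) 0 1 = 0 ∧ Y (i j) 1 0 = 0 ∧
      (Y (i j)).mulVec V 1 = 0 ∧ 0 < (Y (i j)).mulVec V 0) ∧
    ¬ ∃ L : Fin 2 → ℝ,
      Tendsto (fun n => (∑ k, (Y n).mulVec V k)⁻¹ • (Y n).mulVec V) atTop (nhds L) :=
  stmt17_general a d β γ ha hd hβ hγ Mk Mh hMk hMh v₁ hv₁ V hV i hi1 himono ω hωh hωk Y hY
end

section
/- Let M₀, ..., M_{d−1} be nonnegative 2×2 matrices such that every invertible Mₖ = (a b; c d) satisfies a > 0, and additionally a ≥ d whenever b = c = 0 (condition (ii)). Suppose all Mₖ are diagonal. Then for every nonnegative vector V and every ω ∈ {0,...,d−1}^ℕ with Yₙ V ≠ 0 for all n (Yₙ = M_{ω₁}⋯M_{ωₙ}), the sequence Yₙ V / ‖Yₙ V‖ converges. -/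
open Matrix Filter Topology

/-! Diagonal matrices act coordinatewise, so the two coordinates of `Yₙ V` evolve by
`xₙ₊₁ = aₙ xₙ` and `yₙ₊₁ = dₙ yₙ`. Once `x` vanishes it stays zero and the normalized
vector is eventually `(0, 1)`. Otherwise every `aₙ` is positive, and condition (ii)
(`dₙ ≤ aₙ` whenever both are positive) makes the ratio `yₙ / xₙ` antitone; being
nonnegative it converges, and the first normalized coordinate is `(1 + yₙ / xₙ)⁻¹`. -/

namespace Matrix

variable {n α : Type*}

theorem isDiag_fin_two_iff [Zero α] {A : Matrix (Fin 2) (Fin 2) α} :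
    A.IsDiag ↔ A 0 1 = 0 ∧ A 1 0 = 0 := by
  refine ⟨fun h => ⟨h (by decide), h (by decide)⟩, fun ⟨h01, h10⟩ i j hij => ?_⟩
  fin_cases i <;> fin_cases j <;> simp_all

theorem list_prod_eq_diagonal_of_isDiag [Fintype n] [DecidableEq n] [Semiring α]
    {l : List (Matrix n n α)} (h : ∀ A ∈ l, A.IsDiag) :
    l.prod = diagonal (l.map diag).prod := by
  calc l.prod = (l.map fun A => diagonal A.diag).prod := by
        rw [List.map_congr_left fun A hA => (h A hA).diagonal_diag, List.map_id']
    _ = diagonal (l.map diag).prod := by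
        rw [← diagonalRingHom_apply, map_list_prod, List.map_map]
        rfl

theorem list_prod_mulVec_apply_of_isDiag [Fintype n] [DecidableEq n] [Semiring α]
    {l : List (Matrix n n α)} (h : ∀ A ∈ l, A.IsDiag) (v : n → α) (i : n) :
    (l.prod *ᵥ v) i = (l.map fun A => A i i).prod * v i := by
  rw [list_prod_eq_diagonal_of_isDiag h, mulVec_diagonal, Pi.list_prod_apply, List.map_map]
  rfl

end Matrix

section MulRecurrence

variable {x y a d : ℕ → ℝ}

theorem eq_zero_of_mul_recurrence (hxs : ∀ n, x (n + 1) = a n * x n) {n₀ n : ℕ}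
    (h0 : x n₀ = 0) (hn : n₀ ≤ n) : x n = 0 := by
  induction n, hn using Nat.le_induction with
  | base => exact h0
  | succ n _ ih => rw [hxs, ih, mul_zero]

theorem antitone_div_of_mul_recurrence (hx : ∀ n, 0 < x n) (hy : ∀ n, 0 ≤ y n)
    (hxs : ∀ n, x (n + 1) = a n * x n) (hys : ∀ n, y (n + 1) = d n * y n)
    (hda : ∀ n, 0 < a n → 0 < d n → d n ≤ a n) :
    Antitone fun n => y n / x n := by
  refine antitone_nat_of_succ_le fun n => ?_
  have ha : 0 < a n := pos_of_mul_pos_left (hxs n ▸ hx (n + 1)) (hx n).le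
  have hdy : d n * y n ≤ a n * y n := by
    rcases le_or_gt (d n) 0 with hd | hd
    · exact (mul_nonpos_of_nonpos_of_nonneg hd (hy n)).trans (mul_nonneg ha.le (hy n))
    · exact mul_le_mul_of_nonneg_right (hda n ha hd) (hy n)
  calc y (n + 1) / x (n + 1) = d n * y n / (a n * x n) := by rw [hxs, hys]
    _ ≤ a n * y n / (a n * x n) := by gcongr; exact (mul_pos ha (hx n)).le
    _ = y n / x n := mul_div_mul_left _ _ ha.ne'

theorem exists_tendsto_div_add_of_mul_recurrence (hx : ∀ n, 0 ≤ x n) (hy : ∀ n, 0 ≤ y n)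
    (hxs : ∀ n, x (n + 1) = a n * x n) (hys : ∀ n, y (n + 1) = d n * y n)
    (hda : ∀ n, 0 < a n → 0 < d n → d n ≤ a n) :
    ∃ c, Tendsto (fun n => x n / (x n + y n)) atTop (𝓝 c) := by
  by_cases hzero : ∃ n₀, x n₀ = 0
  · obtain ⟨n₀, h0⟩ := hzero
    refine ⟨0, tendsto_const_nhds.congr' ?_⟩
    filter_upwards [eventually_ge_atTop n₀] with n hn
    rw [eq_zero_of_mul_recurrence hxs h0 hn, zero_div]
  · simp only [not_exists] at hzero
    have hxpos : ∀ n, 0 < x n := fun n => (hx n).lt_of_ne' (hzero n)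
    have hratio_nonneg : ∀ n, 0 ≤ y n / x n := fun n => div_nonneg (hy n) (hx n)
    have hratio : Tendsto (fun n => y n / x n) atTop (𝓝 (⨅ n, y n / x n)) :=
      tendsto_atTop_ciInf (antitone_div_of_mul_recurrence hxpos hy hxs hys hda)
        ⟨0, Set.forall_mem_range.2 hratio_nonneg⟩
    have hlim : 0 < 1 + ⨅ n, y n / x n := by linarith [le_ciInf hratio_nonneg]
    refine ⟨_, ((tendsto_const_nhds.add hratio).inv₀ hlim.ne').congr fun n => ?_⟩
    have := (hxpos n).ne'
    field_simp

end MulRecurrence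

theorem tendsto_sum_inv_smul_of_fin_two {u : ℕ → Fin 2 → ℝ} {c : ℝ}
    (hu : ∀ n, ∑ i, u n i ≠ 0)
    (hc : Tendsto (fun n => u n 0 / (u n 0 + u n 1)) atTop (𝓝 c)) :
    Tendsto (fun n => (∑ i, u n i)⁻¹ • u n) atTop (𝓝 ![c, 1 - c]) := by
  simp only [Fin.sum_univ_two] at hu ⊢
  rw [tendsto_pi_nhds]
  intro i
  fin_cases i
  · simpa [div_eq_inv_mul] using hc
  · refine (tendsto_const_nhds.sub hc).congr fun n => ?_
    have := hu n
    simp only [Pi.smul_apply, smul_eq_mul]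
    field_simp
    exact add_sub_cancel_left _ _

/-- If all matrices `M₀, …, M_{N−1}` are nonnegative and diagonal, and every invertible one
`(a b; c d)` satisfies `a > 0` and `a ≥ d` when `b = c = 0` (condition (ii)), then for every
nonnegative `V` and every `ω` with `YₙV ≠ 0` for all `n`, the sequence `YₙV/‖YₙV‖` (sum norm)
converges. -/
theorem stmt18 (N : ℕ) (M : Fin N → Matrix (Fin 2) (Fin 2) ℝ)
    (hpos : ∀ k i j, 0 ≤ M k i j)
    (hii : ∀ k, (M k).det ≠ 0 →
      0 < M k 0 0 ∧ (M k 0 1 = 0 ∧ M k 1 0 = 0 → M k 1 1 ≤ M k 0 0))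
    (hdiag : ∀ k, M k 0 1 = 0 ∧ M k 1 0 = 0)
    (V : Fin 2 → ℝ) (hV : ∀ i, 0 ≤ V i)
    (ω : ℕ → Fin N)
    (Y : ℕ → Matrix (Fin 2) (Fin 2) ℝ)
    (hY : ∀ n, Y n = ((List.range n).map (fun m => M (ω (m + 1)))).prod)
    (hYV : ∀ n, (Y n).mulVec V ≠ 0) :
    ∃ L : Fin 2 → ℝ,
      Tendsto (fun n => (∑ i, (Y n).mulVec V i)⁻¹ • (Y n).mulVec V) atTop (nhds L) := by
  have hcoord : ∀ n i,
      (Y n *ᵥ V) i = ((List.range n).map fun m => M (ω (m + 1)) i i).prod * V i := by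
    intro n i
    rw [hY, list_prod_mulVec_apply_of_isDiag (by simp [isDiag_fin_two_iff, hdiag]), List.map_map]
    rfl
  have hrec : ∀ n i, (Y (n + 1) *ᵥ V) i = M (ω (n + 1)) i i * (Y n *ᵥ V) i := by
    intro n i
    rw [hcoord, hcoord, List.range_succ, List.map_append, List.prod_append]
    simp only [List.map_cons, List.map_nil, List.prod_cons, List.prod_nil, mul_one]
    ring
  have hnonneg : ∀ n i, 0 ≤ (Y n *ᵥ V) i := fun n i =>
    hcoord n i ▸ mul_nonneg (List.prod_nonneg (by simp [hpos])) (hV i)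
  have hsum : ∀ n, ∑ i, (Y n *ᵥ V) i ≠ 0 := fun n h =>
    hYV n (funext fun i => (Finset.sum_eq_zero_iff_of_nonneg fun i _ => hnonneg n i).1 h i
      (Finset.mem_univ i))
  have hda : ∀ k, 0 < M k 0 0 → 0 < M k 1 1 → M k 1 1 ≤ M k 0 0 := fun k ha hd =>
    (hii k (by simp [det_fin_two, hdiag k, ha.ne', hd.ne'])).2 (hdiag k)
  obtain ⟨c, hc⟩ := exists_tendsto_div_add_of_mul_recurrence (hnonneg · 0) (hnonneg · 1)
    (hrec · 0) (hrec · 1) fun n => hda (ω (n + 1))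
  exact ⟨_, tendsto_sum_inv_smul_of_fin_two hsum hc⟩
end
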